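/- arXiv:1701.06852 — 2 statements merged into one kernel-verified Lean document; each statement's English description precedes it below -/
import Mathlib

section
/- For every real x > 0, (1/√(2π)) ∫_x^∞ (v − x)² e^{−v²/2} dv ≤ ψ(x)/x, where ψ(x) = (1/√(2π)) e^{−x²/2}. -/
/-!
On `(x, ∞)` with `x > 0` we have `(v - x)² ≤ v (v - x + 1/x) - 1`, the difference being
`(v - x)(x + 1/x) ≥ 0`. The majorant times `e^{-v²/2}` is exactly the negative derivative of
`(v - x + 1/x) e^{-v²/2}`, so its integral over `(x, ∞)` is the value `e^{-x²/2}/x` of that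
primitive at `x`.
-/

open MeasureTheory Filter Real Set Polynomial

lemma integrable_pow_mul_exp_neg_sq_div_two (n : ℕ) :
    Integrable fun v : ℝ => v ^ n * exp (-v ^ 2 / 2) := by
  have h := integrable_rpow_mul_exp_neg_mul_sq (b := 1 / 2) (by norm_num)
    (s := n) (by linarith [n.cast_nonneg (α := ℝ)])
  refine h.congr (ae_of_all _ fun v => ?_)
  simp only [rpow_natCast]
  ring_nf

lemma integrable_eval_mul_exp_neg_sq_div_two (p : ℝ[X]) :
    Integrable fun v : ℝ => p.eval v * exp (-v ^ 2 / 2) := by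
  induction p using Polynomial.induction_on' with
  | add p q hp hq =>
    simp only [eval_add, add_mul]
    exact hp.add hq
  | monomial n a =>
    simpa only [eval_monomial, mul_assoc] using
      (integrable_pow_mul_exp_neg_sq_div_two n).const_mul a

lemma hasDerivAt_exp_neg_sq_div_two (v : ℝ) :
    HasDerivAt (fun v : ℝ => exp (-v ^ 2 / 2)) (-v * exp (-v ^ 2 / 2)) v := by
  have h : HasDerivAt (fun v : ℝ => -v ^ 2 / 2) (-v) v := by
    refine (((hasDerivAt_pow 2 v).neg).div_const 2).congr_deriv ?_
    push_cast
    ring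
  simpa only [mul_comm] using h.exp

lemma integral_Ioi_mul_add_sub_one_mul_exp_neg_sq_div_two (x a : ℝ) :
    ∫ v in Ioi x, (v * (v + a) - 1) * exp (-v ^ 2 / 2) = (x + a) * exp (-x ^ 2 / 2) := by
  set F : ℝ → ℝ := fun v => (v + a) * exp (-v ^ 2 / 2)
  have hF : ∀ v, HasDerivAt F (-((v * (v + a) - 1) * exp (-v ^ 2 / 2))) v := fun v => by
    refine (((hasDerivAt_id v).add_const a).mul (hasDerivAt_exp_neg_sq_div_two v)).congr_deriv ?_
    rw [id]
    ring
  have hF'int : Integrable fun v => -((v * (v + a) - 1) * exp (-v ^ 2 / 2)) := by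
    have h := integrable_eval_mul_exp_neg_sq_div_two (X * (X + C a) - 1)
    simp only [eval_sub, eval_mul, eval_add, eval_X, eval_C, eval_one] at h
    exact h.neg
  have hFint : Integrable F := by
    have h := integrable_eval_mul_exp_neg_sq_div_two (X + C a)
    simp only [eval_add, eval_X, eval_C] at h
    exact h
  have hlim : Tendsto F atTop (nhds 0) :=
    tendsto_zero_of_hasDerivAt_of_integrableOn_Ioi (a := x) (fun v _ => hF v)
      hF'int.integrableOn hFint.integrableOn
  have h := integral_Ioi_of_hasDerivAt_of_tendsto' (a := x) (fun v _ => hF v)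
    hF'int.integrableOn hlim
  rwa [integral_neg, zero_sub, neg_inj] at h

lemma sq_sub_le_mul_sub_add_inv_sub_one {x v : ℝ} (hx : 0 < x) (hxv : x ≤ v) :
    (v - x) ^ 2 ≤ v * (v + (x⁻¹ - x)) - 1 := by
  have key : v * (v + (x⁻¹ - x)) - 1 - (v - x) ^ 2 = (v - x) * (x + x⁻¹) := by
    field_simp
    ring
  rw [← sub_nonneg, key]
  exact mul_nonneg (sub_nonneg.2 hxv) (add_pos hx (inv_pos.2 hx)).le

theorem stmt_7 (x : ℝ) (hx : 0 < x) :
    (1 / Real.sqrt (2 * Real.pi)) * ∫ v in Set.Ioi x, (v - x) ^ 2 * Real.exp (-v ^ 2 / 2) ≤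
      ((1 / Real.sqrt (2 * Real.pi)) * Real.exp (-x ^ 2 / 2)) / x := by
  have hf : Integrable fun v => (v - x) ^ 2 * exp (-v ^ 2 / 2) := by
    have h := integrable_eval_mul_exp_neg_sq_div_two ((X - C x) ^ 2)
    simp only [eval_pow, eval_sub, eval_X, eval_C] at h
    exact h
  have hg : Integrable fun v => (v * (v + (x⁻¹ - x)) - 1) * exp (-v ^ 2 / 2) := by
    have h := integrable_eval_mul_exp_neg_sq_div_two (X * (X + C (x⁻¹ - x)) - 1)
    simp only [eval_sub, eval_mul, eval_add, eval_X, eval_C, eval_one] at h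
    exact h
  have hmono : ∫ v in Ioi x, (v - x) ^ 2 * exp (-v ^ 2 / 2) ≤
      ∫ v in Ioi x, (v * (v + (x⁻¹ - x)) - 1) * exp (-v ^ 2 / 2) := by
    exact setIntegral_mono_on hf.integrableOn hg.integrableOn measurableSet_Ioi fun v hv =>
      mul_le_mul_of_nonneg_right (sq_sub_le_mul_sub_add_inv_sub_one hx hv.le) (exp_nonneg _)
  rw [integral_Ioi_mul_add_sub_one_mul_exp_neg_sq_div_two, add_sub_cancel] at hmono
  calc (1 / √(2 * π)) * ∫ v in Ioi x, (v - x) ^ 2 * exp (-v ^ 2 / 2)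
      ≤ (1 / √(2 * π)) * (x⁻¹ * exp (-x ^ 2 / 2)) := by gcongr
    _ = ((1 / √(2 * π)) * exp (-x ^ 2 / 2)) / x := by ring
end

section
/- Let z ∈ ℝⁿ, let w_1, …, w_n > 0, fix x ∈ ℝⁿ with s = |{i : x_i ≠ z_i}|, let τ > 0, and let C = {u ∈ ℝⁿ : u_i = τ w_i sign(x_i − z_i) for i with x_i ≠ z_i, and |u_i| ≤ τ w_i for i with x_i = z_i}. If 𝗀 is a standard Gaussian random vector in ℝⁿ (i.i.d. N(0,1) coordinates), then E_𝗀[dist²(𝗀, C)] ≤ s + τ² ∑_{i : x_i ≠ z_i} w_i² + 2 ∑_{i : x_i = z_i} ψ(τ w_i)/(τ w_i), where ψ(t) = (1/√(2π)) e^{−t²/2} and dist(a, C) = inf_{u ∈ C} ‖a − u‖₂. -/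
/-!
Let `g` be standard Gaussian and `u(g)` the coordinatewise projection of `g` onto the box `C`.
Then `dist(g, C)² ≤ ‖g - u(g)‖²`, which splits over the coordinates. Off the support
the coordinate of `C` is the single point `c = ±τ wᵢ`, contributing `E (g - c)² = 1 + τ² wᵢ²`;
on the support it is `[-a, a]` with `a = τ wᵢ`, contributing `E (|g| - a)₊²`, which by symmetry is
`2 ∫_a^∞ (t - a)² ψ(t) dt`. The function `-(t - a + 1/a) ψ(t)` has derivative
`(t (t - a) + t/a - 1) ψ(t) ≥ (t - a)² ψ(t)` on `(a, ∞)` and tends to `0` at infinity, so this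
integral is at most `ψ(a)/a`.
-/

open MeasureTheory ProbabilityTheory Real Filter Set Topology
open scoped NNReal

namespace ProbabilityTheory

lemma integral_sq_gaussianReal (μ : ℝ) (v : ℝ≥0) :
    ∫ x, x ^ 2 ∂gaussianReal μ v = v + μ ^ 2 := by
  have h := variance_eq_sub (memLp_id_gaussianReal (μ := μ) (v := v) 2)
  simp only [Pi.pow_apply, id_eq] at h
  rw [variance_id_gaussianReal, integral_id_gaussianReal] at h
  linarith

lemma integral_sub_sq_gaussianReal (μ : ℝ) (v : ℝ≥0) (c : ℝ) :
    ∫ x, (x - c) ^ 2 ∂gaussianReal μ v = v + (μ - c) ^ 2 := by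
  rw [← integral_sq_gaussianReal, ← gaussianReal_map_sub_const,
    integral_map (by fun_prop) (by fun_prop)]

lemma integrable_sub_sq_gaussianReal (μ : ℝ) (v : ℝ≥0) (c : ℝ) :
    Integrable (fun x => (x - c) ^ 2) (gaussianReal μ v) :=
  ((memLp_id_gaussianReal 2).sub (memLp_const c)).integrable_sq

lemma gaussianPDFReal_zero_one (t : ℝ) :
    gaussianPDFReal 0 1 t = (√(2 * π))⁻¹ * exp (-t ^ 2 / 2) := by
  simp [gaussianPDFReal]

lemma gaussianPDFReal_zero_one_abs (t : ℝ) : gaussianPDFReal 0 1 |t| = gaussianPDFReal 0 1 t := by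
  simp [gaussianPDFReal_zero_one]

lemma hasDerivAt_gaussianPDFReal_zero_one (t : ℝ) :
    HasDerivAt (gaussianPDFReal 0 1) (-t * gaussianPDFReal 0 1 t) t := by
  have h : HasDerivAt (fun t : ℝ => -t ^ 2 / 2) (-t) t :=
    ((hasDerivAt_pow 2 t).neg.div_const 2).congr_deriv (by norm_num; ring)
  rw [show gaussianPDFReal 0 1 = _ from funext gaussianPDFReal_zero_one]
  exact (h.exp.const_mul _).congr_deriv (by ring)

lemma tendsto_pow_mul_gaussianPDFReal_atTop (k : ℕ) :
    Tendsto (fun t => t ^ k * gaussianPDFReal 0 1 t) atTop (𝓝 0) := by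
  have h := ((tendsto_rpow_abs_mul_exp_neg_mul_sq_cocompact (a := 1 / 2) (by norm_num) k).mono_left
    atTop_le_cocompact).const_mul (√(2 * π))⁻¹
  rw [mul_zero] at h
  refine h.congr' ?_
  filter_upwards [eventually_ge_atTop 0] with t ht
  rw [gaussianPDFReal_zero_one, abs_of_nonneg ht, rpow_natCast]
  ring_nf

lemma setIntegral_Ioi_sub_sq_mul_gaussianPDFReal_le {a : ℝ} (ha : 0 < a) :
    ∫ t in Ioi a, (t - a) ^ 2 * gaussianPDFReal 0 1 t ≤ gaussianPDFReal 0 1 a / a := by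
  set φ := gaussianPDFReal 0 1
  set G : ℝ → ℝ := fun t => -(t - a + a⁻¹) * φ t
  set G' : ℝ → ℝ := fun t => (t * (t - a) + t / a - 1) * φ t
  have hG : ∀ t ∈ Ici a, HasDerivAt G (G' t) t := fun t _ =>
    ((((hasDerivAt_id t).sub_const a).add_const a⁻¹).neg.mul
      (hasDerivAt_gaussianPDFReal_zero_one t)).congr_deriv
        (by simp only [id_eq, Pi.neg_apply, G', φ]; ring)
  have hG'_nonneg : ∀ t ∈ Ioi a, 0 ≤ G' t := fun t (ht : a < t) => by
    have : 1 ≤ t / a := (one_le_div ha).2 ht.le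
    exact mul_nonneg (by nlinarith) (gaussianPDFReal_nonneg 0 1 t)
  have hG_lim : Tendsto G atTop (𝓝 0) := by
    have h := ((tendsto_pow_mul_gaussianPDFReal_atTop 1).add
      ((tendsto_pow_mul_gaussianPDFReal_atTop 0).const_mul (a⁻¹ - a))).neg
    rw [mul_zero, add_zero, neg_zero] at h
    exact h.congr fun t => by simp only [G, φ]; ring
  calc ∫ t in Ioi a, (t - a) ^ 2 * φ t
      ≤ ∫ t in Ioi a, G' t := by
        refine integral_mono_of_nonneg (ae_of_all _ fun t => ?_)
          (integrableOn_Ioi_deriv_of_nonneg' hG hG'_nonneg hG_lim)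
          (ae_restrict_of_forall_mem measurableSet_Ioi fun t (ht : a < t) => ?_)
        · have := gaussianPDFReal_nonneg 0 1 t
          positivity
        · have : 1 ≤ t / a := (one_le_div ha).2 ht.le
          exact mul_le_mul_of_nonneg_right (by nlinarith) (gaussianPDFReal_nonneg 0 1 t)
    _ = φ a / a := by
        rw [integral_Ioi_of_hasDerivAt_of_nonneg' hG hG'_nonneg hG_lim]
        simp only [G]
        ring

lemma integral_sq_posPart_abs_sub_gaussianReal_le {a : ℝ} (ha : 0 < a) :
    ∫ t, max (|t| - a) 0 ^ 2 ∂gaussianReal 0 1 ≤ 2 * (gaussianPDFReal 0 1 a / a) := by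
  set g : ℝ → ℝ := fun t => max (t - a) 0 ^ 2 * gaussianPDFReal 0 1 t
  have hg_Ioi : ∫ t in Ioi 0, g t = ∫ t in Ioi a, (t - a) ^ 2 * gaussianPDFReal 0 1 t := by
    have hg_zero : ∀ t, t ≤ a → g t = 0 := fun t ht => by simp [g, ht]
    rw [setIntegral_eq_integral_of_forall_compl_eq_zero (s := Ioi 0) fun t ht =>
        hg_zero t ((not_lt.1 ht).trans ha.le),
      ← setIntegral_eq_integral_of_forall_compl_eq_zero (s := Ioi a) fun t ht =>
        hg_zero t (not_lt.1 ht)]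
    exact setIntegral_congr_fun measurableSet_Ioi fun t (ht : a < t) => by
      simp only [g, max_eq_left (sub_nonneg.2 ht.le)]
  calc ∫ t, max (|t| - a) 0 ^ 2 ∂gaussianReal 0 1
      = ∫ t, g |t| := by
        rw [integral_gaussianReal_eq_integral_smul one_ne_zero]
        simp only [g, gaussianPDFReal_zero_one_abs, smul_eq_mul, mul_comm]
    _ = 2 * ∫ t in Ioi 0, g t := integral_comp_abs
    _ ≤ 2 * (gaussianPDFReal 0 1 a / a) := by
        rw [hg_Ioi]
        gcongr
        exact setIntegral_Ioi_sub_sq_mul_gaussianPDFReal_le ha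

lemma integrable_sq_posPart_abs_sub_gaussianReal (μ : ℝ) (v : ℝ≥0) {a : ℝ} (ha : 0 ≤ a) :
    Integrable (fun t => max (|t| - a) 0 ^ 2) (gaussianReal μ v) := by
  refine (integrable_sub_sq_gaussianReal μ v 0).mono' (by fun_prop) (ae_of_all _ fun t => ?_)
  have : max (|t| - a) 0 ≤ |t| := max_le (by linarith) (abs_nonneg t)
  rw [norm_of_nonneg (by positivity), sub_zero, ← sq_abs t]
  gcongr

end ProbabilityTheory

lemma Real.sign_sq_of_ne_zero {r : ℝ} (hr : r ≠ 0) : Real.sign r ^ 2 = 1 := by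
  rcases Real.sign_apply_eq_of_ne_zero r hr with h | h <;> simp [h]

lemma sq_sub_max_neg_min {a : ℝ} (ha : 0 ≤ a) (t : ℝ) :
    (t - max (-a) (min a t)) ^ 2 = max (|t| - a) 0 ^ 2 := by
  rcases le_total t (-a) with h | h
  · rw [min_eq_right (by linarith), max_eq_left h, abs_of_nonpos (by linarith),
      max_eq_left (by linarith)]
    ring
  rcases le_total t a with h' | h'
  · rw [min_eq_right h', max_eq_right h, max_eq_right (sub_nonpos.2 (abs_le.2 ⟨h, h'⟩))]
    ring
  · rw [min_eq_left h', max_eq_right (by linarith), abs_of_nonneg (by linarith),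
      max_eq_left (by linarith)]

lemma infDist_sq_le_sum_sq {ι : Type*} [Fintype ι] {C : Set (EuclideanSpace ℝ ι)}
    {u : EuclideanSpace ℝ ι} (hu : u ∈ C) (v : EuclideanSpace ℝ ι) :
    Metric.infDist v C ^ 2 ≤ ∑ i, (v i - u i) ^ 2 := by
  calc Metric.infDist v C ^ 2 ≤ dist v u ^ 2 := by
        gcongr
        · exact Metric.infDist_nonneg
        · exact Metric.infDist_le_dist_of_mem hu
    _ = ∑ i, (v i - u i) ^ 2 := by
        simp only [EuclideanSpace.dist_eq, Real.dist_eq, sq_abs]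
        exact Real.sq_sqrt (by positivity)

lemma infDist_sq_le_sum_of_forall_mem {ι : Type*} [Fintype ι] {p : ι → Prop} [DecidablePred p]
    {c a : ι → ℝ} (ha : ∀ i, 0 ≤ a i) {C : Set (EuclideanSpace ℝ ι)}
    (hC : ∀ u : EuclideanSpace ℝ ι, (∀ i, ¬p i → u i = c i) → (∀ i, p i → |u i| ≤ a i) → u ∈ C)
    (v : EuclideanSpace ℝ ι) :
    Metric.infDist v C ^ 2 ≤
      ∑ i, if p i then max (|v i| - a i) 0 ^ 2 else (v i - c i) ^ 2 := by
  let u : EuclideanSpace ℝ ι := (EuclideanSpace.equiv ι ℝ).symm fun i =>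
    if p i then max (-a i) (min (a i) (v i)) else c i
  have hu : u ∈ C := by
    refine hC u (fun i hi => if_neg hi) fun i hi => ?_
    change |ite _ _ _| ≤ _
    rw [if_pos hi, abs_le]
    exact ⟨le_max_left _ _, max_le (by linarith [ha i]) (min_le_left _ _)⟩
  refine (infDist_sq_le_sum_sq hu v).trans_eq (Finset.sum_congr rfl fun i _ => ?_)
  by_cases hi : p i
  · simp [u, hi, sq_sub_max_neg_min (ha i)]
  · simp [u, hi]

lemma integral_pi_le_sum_integral {ι X : Type*} [Fintype ι] [MeasurableSpace X]
    {μ : ι → Measure X} [∀ i, IsProbabilityMeasure (μ i)] {F : (ι → X) → ℝ} {d : ι → X → ℝ}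
    (hd : ∀ i, Integrable (d i) (μ i)) (hF_nonneg : ∀ g, 0 ≤ F g)
    (hF : ∀ g, F g ≤ ∑ i, d i (g i)) :
    ∫ g, F g ∂Measure.pi μ ≤ ∑ i, ∫ t, d i t ∂μ i := by
  have hd_pi : ∀ i ∈ Finset.univ, Integrable (fun g : ι → X => d i (g i)) (Measure.pi μ) :=
    fun i _ => integrable_comp_eval (hd i)
  calc _ ≤ ∫ g, ∑ i, d i (g i) ∂Measure.pi μ :=
        integral_mono_of_nonneg (ae_of_all _ hF_nonneg) (integrable_finsetSum _ hd_pi)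
          (ae_of_all _ hF)
    _ = ∑ i, ∫ t, d i t ∂μ i := by
        rw [integral_finsetSum _ hd_pi]
        exact Finset.sum_congr rfl fun i _ => integral_comp_eval (hd i).aestronglyMeasurable

open MeasureTheory ProbabilityTheory in
theorem stmt_10 (n : ℕ) (z : EuclideanSpace ℝ (Fin n)) (w : Fin n → ℝ) (hw : ∀ i, 0 < w i)
    (x : EuclideanSpace ℝ (Fin n)) (s : ℕ)
    (hs : s = (Finset.univ.filter fun i => x i ≠ z i).card)
    (τ : ℝ) (hτ : 0 < τ)
    (C : Set (EuclideanSpace ℝ (Fin n)))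
    (hC : C = {u : EuclideanSpace ℝ (Fin n) |
      (∀ i, x i ≠ z i → u i = τ * w i * Real.sign (x i - z i)) ∧
        ∀ i, x i = z i → |u i| ≤ τ * w i}) :
    ∫ gv : Fin n → ℝ,
        Metric.infDist ((EuclideanSpace.equiv (Fin n) ℝ).symm gv) C ^ 2
        ∂(Measure.pi fun _ => gaussianReal 0 1) ≤
      (s : ℝ) + τ ^ 2 * (∑ i ∈ Finset.univ.filter fun i => x i ≠ z i, w i ^ 2) +
        2 * ∑ i ∈ Finset.univ.filter fun i => x i = z i,
          (1 / Real.sqrt (2 * Real.pi)) * Real.exp (-(τ * w i) ^ 2 / 2) / (τ * w i) := by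
  have ha : ∀ i, 0 < τ * w i := fun i => mul_pos hτ (hw i)
  set d : Fin n → ℝ → ℝ := fun i t => if x i = z i then max (|t| - τ * w i) 0 ^ 2
    else (t - τ * w i * Real.sign (x i - z i)) ^ 2
  have hd : ∀ i, Integrable (d i) (gaussianReal 0 1) := fun i => by
    by_cases hi : x i = z i
    · simpa [d, hi] using integrable_sq_posPart_abs_sub_gaussianReal 0 1 (ha i).le
    · simpa [d, hi] using integrable_sub_sq_gaussianReal 0 1 _
  have h_off : ∀ i ∈ Finset.univ.filter fun i => ¬x i = z i,
      ∫ t, d i t ∂gaussianReal 0 1 = 1 + τ ^ 2 * w i ^ 2 := fun i hi => by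
    have hi : x i ≠ z i := (Finset.mem_filter.1 hi).2
    simp only [d, if_neg hi, integral_sub_sq_gaussianReal, zero_sub, neg_sq, mul_pow,
      Real.sign_sq_of_ne_zero (sub_ne_zero.2 hi)]
    norm_num
  have h_on : ∀ i ∈ Finset.univ.filter fun i => x i = z i,
      ∫ t, d i t ∂gaussianReal 0 1 ≤
        2 * ((1 / Real.sqrt (2 * Real.pi)) * Real.exp (-(τ * w i) ^ 2 / 2) / (τ * w i)) :=
      fun i hi => by
    simp only [d, if_pos (Finset.mem_filter.1 hi).2, one_div, ← gaussianPDFReal_zero_one]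
    exact integral_sq_posPart_abs_sub_gaussianReal_le (ha i)
  refine (integral_pi_le_sum_integral hd (fun _ => sq_nonneg _) fun g =>
    infDist_sq_le_sum_of_forall_mem (fun i => (ha i).le) (fun u hoff hon => hC ▸ ⟨hoff, hon⟩)
      _).trans ?_
  rw [← Finset.sum_filter_add_sum_filter_not _ (fun i => x i = z i), Finset.sum_congr rfl h_off,
    Finset.sum_add_distrib, Finset.sum_const, ← Finset.mul_sum, hs, nsmul_one]
  linarith [(Finset.sum_le_sum h_on).trans_eq (Finset.mul_sum ..).symm]
end
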